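/- Let λ ∈ ℂ with Re λ ≥ 0 and λ ≠ 0, and a > 0. Write −λ/a = r(cos θ + i sin θ) with r = |λ|/a > 0 and θ ∈ [π/2, 3π/2]. Set ā = cos(θ/4), b̄ = sin(θ/4), μ₁ = r^{1/4}(−b̄ + i ā), μ₂ = r^{1/4}(−ā − i b̄). Then the 2×2 complex matrix M = [[μ₁³, μ₂³],[μ₁, μ₂]] is invertible. -/

import Mathlib

open Real Complex

/-!
Up to the factor `μ₁ μ₂`, the determinant of `M` is `μ₁² - μ₂²`, and with `μ₁ = s(-b + a i)`,
`μ₂ = s(-a - b i)` one has `Im (μ₁² - μ₂²) = -4 s² a b`. For `θ ∈ [π/2, 3π/2]` the quarter angle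
lies in `[π/8, 3π/8]`, where both `a = cos (θ/4)` and `b = sin (θ/4)` are positive.
-/

theorem Matrix.isUnit_of_pow_three_of_ne {K : Type*} [Field K] {x y : K} (hx : x ≠ 0) (hy : y ≠ 0)
    (hxy : x ^ 2 ≠ y ^ 2) : IsUnit !![x ^ 3, y ^ 3; x, y] := by
  rw [Matrix.isUnit_iff_isUnit_det, Matrix.det_fin_two_of, isUnit_iff_ne_zero]
  have hdet : x ^ 3 * y - y ^ 3 * x = x * y * (x ^ 2 - y ^ 2) := by ring
  rw [hdet]
  exact mul_ne_zero (mul_ne_zero hx hy) (sub_ne_zero.mpr hxy)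

theorem Complex.im_sq_sub_sq_rotated (s a b : ℝ) :
    ((s * (-b + a * I)) ^ 2 - (s * (-a - b * I)) ^ 2 : ℂ).im = -4 * s ^ 2 * a * b := by
  simp only [sq, mul_im, mul_re, sub_im, add_im, add_re, sub_re, neg_re, neg_im, ofReal_re,
    ofReal_im, I_re, I_im]
  ring

theorem Matrix.isUnit_of_rotated_pair {s a b : ℝ} (hs : s ≠ 0) (ha : a ≠ 0) (hb : b ≠ 0) :
    IsUnit !![(s * (-b + a * I) : ℂ) ^ 3, (s * (-a - b * I)) ^ 3; s * (-b + a * I),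
      s * (-a - b * I)] := by
  refine Matrix.isUnit_of_pow_three_of_ne ?_ ?_ ?_
  · intro h
    have him := congrArg Complex.im h
    simp only [mul_im, add_im, add_re, neg_re, neg_im, ofReal_re, ofReal_im, mul_re, I_re,
      I_im, zero_im] at him
    exact mul_ne_zero hs ha (by linarith)
  · intro h
    have hre := congrArg Complex.re h
    simp only [mul_re, sub_re, sub_im, neg_re, neg_im, ofReal_re, ofReal_im, mul_im, I_re,
      I_im, zero_re] at hre
    exact mul_ne_zero hs ha (by linarith)
  · intro h
    have him := congrArg Complex.im (sub_eq_zero.mpr h)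
    rw [Complex.im_sq_sub_sq_rotated, zero_im] at him
    have : s ^ 2 * a * b ≠ 0 := by positivity
    exact this (by linarith)

theorem stmt11_general (lam : ℂ) (hlam : lam ≠ 0) (a : ℝ) (ha : 0 < a)
    (r θ : ℝ) (hr : r = ‖lam‖ / a) (hθ : θ ∈ Set.Icc (π / 2) (3 * π / 2))
    (abar bbar : ℝ) (habar : abar = Real.cos (θ / 4)) (hbbar : bbar = Real.sin (θ / 4))
    (μ₁ μ₂ : ℂ)
    (hμ₁ : μ₁ = ((r ^ ((1:ℝ)/4) : ℝ) : ℂ) * (-(bbar : ℂ) + (abar : ℂ) * Complex.I))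
    (hμ₂ : μ₂ = ((r ^ ((1:ℝ)/4) : ℝ) : ℂ) * (-(abar : ℂ) - (bbar : ℂ) * Complex.I))
    (M : Matrix (Fin 2) (Fin 2) ℂ) (hM : M = !![μ₁ ^ 3, μ₂ ^ 3; μ₁, μ₂]) :
    IsUnit M := by
  have hr_pos : 0 < r := hr ▸ div_pos (norm_pos_iff.mpr hlam) ha
  have habar_pos : 0 < abar :=
    habar ▸ cos_pos_of_mem_Ioo ⟨by linarith [hθ.1, pi_pos], by linarith [hθ.2, pi_pos]⟩
  have hbbar_pos : 0 < bbar :=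
    hbbar ▸ sin_pos_of_pos_of_lt_pi (by linarith [hθ.1, pi_pos]) (by linarith [hθ.2, pi_pos])
  subst hM hμ₁ hμ₂
  exact Matrix.isUnit_of_rotated_pair (rpow_pos_of_pos hr_pos _).ne' habar_pos.ne' hbbar_pos.ne'

theorem stmt11 (lam : ℂ) (hre : 0 ≤ lam.re) (hlam : lam ≠ 0) (a : ℝ) (ha : 0 < a)
    (r θ : ℝ) (hr : r = ‖lam‖ / a) (hθ : θ ∈ Set.Icc (π / 2) (3 * π / 2))
    (hpolar : -lam / (a : ℂ) = (r : ℂ) * (Real.cos θ + Real.sin θ * Complex.I))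
    (abar bbar : ℝ) (habar : abar = Real.cos (θ / 4)) (hbbar : bbar = Real.sin (θ / 4))
    (μ₁ μ₂ : ℂ)
    (hμ₁ : μ₁ = ((r ^ ((1:ℝ)/4) : ℝ) : ℂ) * (-(bbar : ℂ) + (abar : ℂ) * Complex.I))
    (hμ₂ : μ₂ = ((r ^ ((1:ℝ)/4) : ℝ) : ℂ) * (-(abar : ℂ) - (bbar : ℂ) * Complex.I))
    (M : Matrix (Fin 2) (Fin 2) ℂ) (hM : M = !![μ₁ ^ 3, μ₂ ^ 3; μ₁, μ₂]) :
    IsUnit M :=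
  stmt11_general lam hlam a ha r θ hr hθ abar bbar habar hbbar μ₁ μ₂ hμ₁ hμ₂ M hM
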